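/- arXiv:2509.00832 — 2 statements merged into one kernel-verified Lean document; each statement's English description precedes it below -/
import Mathlib

section
/- Let N ≥ 1 and let x, y : Fin N → EuclideanSpace ℝ (Fin 3) be two point clouds, with centroids x̄ = (1/N)·Σ_i x i and ȳ = (1/N)·Σ_i y i. Then PM²(x,y) − 2 · RMSD²(x,y) ≤ −2 · ‖x̄ − ȳ‖². -/
/-!
By the reverse triangle inequality each term `(‖x i - x j‖ - ‖y i - y j‖)²` is at most
`‖d i - d j‖²` for the displacements `d = x - y`, and the Lagrange-type identity
`∑ᵢ ∑ⱼ ‖d i - d j‖² = 2N ∑ᵢ ‖d i‖² - 2 ‖∑ᵢ d i‖²` turns the sum of these bounds into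
`2N² (RMSD² - ‖x̄ - ȳ‖²)`.
-/

open Finset

lemma sq_norm_sub_norm_le {E : Type*} [SeminormedAddCommGroup E] (u v : E) :
    (‖u‖ - ‖v‖) ^ 2 ≤ ‖u - v‖ ^ 2 :=
  sq_le_sq.mpr ((abs_norm_sub_norm_le u v).trans (le_abs_self _))

section
variable {ι F : Type*} [Fintype ι] [NormedAddCommGroup F] [InnerProductSpace ℝ F]

lemma norm_sum_sq_eq_sum_sum_inner (d : ι → F) :
    ‖∑ i, d i‖ ^ 2 = ∑ i, ∑ j, inner ℝ (d i) (d j) := by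
  rw [← real_inner_self_eq_norm_sq, sum_inner]
  simp only [inner_sum]

lemma sum_sum_norm_sub_sq (d : ι → F) :
    ∑ i, ∑ j, ‖d i - d j‖ ^ 2 = 2 * Fintype.card ι * ∑ i, ‖d i‖ ^ 2 - 2 * ‖∑ i, d i‖ ^ 2 := by
  simp only [norm_sub_sq_real, sum_add_distrib, sum_sub_distrib, ← mul_sum, sum_const,
    card_univ, nsmul_eq_mul, norm_sum_sq_eq_sum_sum_inner]
  ring

lemma sum_sum_sq_norm_sub_sub_norm_sub_le (x y : ι → F) :
    ∑ i, ∑ j, (‖x i - x j‖ - ‖y i - y j‖) ^ 2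
      ≤ 2 * Fintype.card ι * ∑ i, ‖x i - y i‖ ^ 2 - 2 * ‖∑ i, x i - ∑ i, y i‖ ^ 2 :=
  calc _ ≤ ∑ i, ∑ j, ‖(x i - y i) - (x j - y j)‖ ^ 2 :=
        sum_le_sum fun i _ ↦ sum_le_sum fun j _ ↦ by
          rw [← sub_sub_sub_comm]
          exact sq_norm_sub_norm_le _ _
    _ = _ := by rw [sum_sum_norm_sub_sq, sum_sub_distrib]

end

theorem pm_sq_sub_two_rmsd_sq_le_general (N : ℕ)
    (x y : Fin N → EuclideanSpace ℝ (Fin 3)) :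
    (1 / (N : ℝ) ^ 2) * ∑ i, ∑ j, (‖x i - x j‖ - ‖y i - y j‖) ^ 2 -
        2 * ((1 / (N : ℝ)) * ∑ i, ‖x i - y i‖ ^ 2) ≤
      -2 * ‖(1 / (N : ℝ)) • ∑ i, x i - (1 / (N : ℝ)) • ∑ i, y i‖ ^ 2 := by
  have hsum := sum_sum_sq_norm_sub_sub_norm_sub_le x y
  rw [Fintype.card_fin] at hsum
  have hscale : (N : ℝ) * (1 / N) ^ 2 = 1 / N := by
    rw [one_div, sq, ← mul_assoc]
    simpa using inv_mul_mul_self ((N : ℝ)⁻¹)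
  rw [← smul_sub, norm_smul, mul_pow, Real.norm_of_nonneg (by positivity), ← one_div_pow]
  linear_combination (1 / (N : ℝ)) ^ 2 * hsum + 2 * (∑ i, ‖x i - y i‖ ^ 2) * hscale

/-- For point clouds `x, y : Fin N → EuclideanSpace ℝ (Fin 3)` with `N ≥ 1`,
with centroids `x̄ = (1/N)·Σ_i x i` and `ȳ = (1/N)·Σ_i y i`, we have
`PM²(x,y) − 2·RMSD²(x,y) ≤ −2·‖x̄ − ȳ‖²`. -/
theorem pm_sq_sub_two_rmsd_sq_le (N : ℕ) (hN : 1 ≤ N)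
    (x y : Fin N → EuclideanSpace ℝ (Fin 3)) :
    (1 / (N : ℝ) ^ 2) * ∑ i, ∑ j, (‖x i - x j‖ - ‖y i - y j‖) ^ 2 -
        2 * ((1 / (N : ℝ)) * ∑ i, ‖x i - y i‖ ^ 2) ≤
      -2 * ‖(1 / (N : ℝ)) • ∑ i, x i - (1 / (N : ℝ)) • ∑ i, y i‖ ^ 2 :=
  pm_sq_sub_two_rmsd_sq_le_general N x y
end

section
/- Rigid-body RMSD formula in the center-of-mass frame: let N ≥ 1, let a : Fin N → ℝ³ be points with weights w : Fin N → ℝ satisfying w i ≥ 0 and W := Σ_i w i > 0, and suppose the weighted centroid vanishes: Σ_i w i · a i = 0. Let Q = (s, q⃗) be a unit quaternion with rotation matrix R := R(Q) and t⃗ ∈ ℝ³. Then (1/W)·Σ_i w i · ‖a i − R·(a i) − t⃗‖² = ‖t⃗‖² + (4/W)·(q⃗ᵀ · I · q⃗), where I is the weighted inertia tensor of the points a. -/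
/-!
Write `dᵢ = aᵢ - R aᵢ`. Since `R` is linear, `Σ wᵢ dᵢ = 0`, so expanding `‖dᵢ - t‖²` the cross
terms cancel and the translation contributes exactly `W ‖t‖²`. For a unit quaternion,
`x - R x = -2 (s q × x + q × (q × x))` with orthogonal summands, hence
`‖x - R x‖² = 4 (s² + ‖q‖²) ‖q × x‖² = 4 ‖q × x‖²`; and `qᵀ I q = Σ wᵢ ‖q × aᵢ‖²`.
-/

open Matrix

/-- The Euclidean squared norm of a vector in `ℝ³`. -/
noncomputable def sqnorm (u : Fin 3 → ℝ) : ℝ :=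
  ‖(EuclideanSpace.equiv (Fin 3) ℝ).symm u‖ ^ 2

/-- The rotation matrix associated with the unit quaternion `(s, q⃗)`. -/
def rotMat (s : ℝ) (q : Fin 3 → ℝ) : Matrix (Fin 3) (Fin 3) ℝ :=
  !![s ^ 2 + q 0 ^ 2 - q 1 ^ 2 - q 2 ^ 2, 2 * q 0 * q 1 - 2 * s * q 2,
      2 * q 0 * q 2 + 2 * s * q 1;
    2 * q 0 * q 1 + 2 * s * q 2, s ^ 2 - q 0 ^ 2 + q 1 ^ 2 - q 2 ^ 2,
      2 * q 1 * q 2 - 2 * s * q 0;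
    2 * q 0 * q 2 - 2 * s * q 1, 2 * q 1 * q 2 + 2 * s * q 0,
      s ^ 2 - q 0 ^ 2 - q 1 ^ 2 + q 2 ^ 2]

/-- The weighted inertia tensor of points `a i = (x i, y i, z i) ∈ ℝ³`
with weights `w i`. -/
def inertia (N : ℕ) (w : Fin N → ℝ) (a : Fin N → Fin 3 → ℝ) :
    Matrix (Fin 3) (Fin 3) ℝ :=
  !![∑ i, w i * ((a i 1) ^ 2 + (a i 2) ^ 2), -∑ i, w i * (a i 0 * a i 1),
      -∑ i, w i * (a i 0 * a i 2);
    -∑ i, w i * (a i 0 * a i 1), ∑ i, w i * ((a i 0) ^ 2 + (a i 2) ^ 2),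
      -∑ i, w i * (a i 1 * a i 2);
    -∑ i, w i * (a i 0 * a i 2), -∑ i, w i * (a i 1 * a i 2),
      ∑ i, w i * ((a i 0) ^ 2 + (a i 1) ^ 2)]

lemma sqnorm_eq_dotProduct (u : Fin 3 → ℝ) : sqnorm u = u ⬝ᵥ u := by
  rw [sqnorm, EuclideanSpace.norm_eq, Real.sq_sqrt (by positivity)]
  simp [dotProduct, sq]

lemma sqnorm_eq (u : Fin 3 → ℝ) : sqnorm u = u 0 ^ 2 + u 1 ^ 2 + u 2 ^ 2 := by
  simp [sqnorm_eq_dotProduct, dotProduct, Fin.sum_univ_three, sq]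

lemma sum_mul_sqnorm_sub_of_sum_smul_eq_zero {ι : Type*} [Fintype ι] (w : ι → ℝ)
    (d : ι → Fin 3 → ℝ) (hd : ∑ i, w i • d i = 0) (t : Fin 3 → ℝ) :
    ∑ i, w i * sqnorm (d i - t) = ∑ i, w i * sqnorm (d i) + (∑ i, w i) * sqnorm t := by
  have hcross : ∑ i, w i * (d i ⬝ᵥ t) = 0 := by
    simp_rw [← smul_eq_mul, ← smul_dotProduct, ← sum_dotProduct, hd, zero_dotProduct]
  calc ∑ i, w i * sqnorm (d i - t)
      = ∑ i, (w i * sqnorm (d i) - 2 * (w i * (d i ⬝ᵥ t)) + w i * sqnorm t) :=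
        Finset.sum_congr rfl fun i _ => by
          simp only [sqnorm_eq_dotProduct, sub_dotProduct, dotProduct_sub, dotProduct_comm t]
          ring
    _ = ∑ i, w i * sqnorm (d i) + (∑ i, w i) * sqnorm t := by
        rw [Finset.sum_add_distrib, Finset.sum_sub_distrib, ← Finset.mul_sum, hcross,
          ← Finset.sum_mul, mul_zero, sub_zero]

lemma sqnorm_sub_rotMat_mulVec {s : ℝ} {q : Fin 3 → ℝ} (hQ : s ^ 2 + sqnorm q = 1)
    (x : Fin 3 → ℝ) : sqnorm (x - rotMat s q *ᵥ x) = 4 * sqnorm (q ⨯₃ x) := by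
  rw [sqnorm_eq] at hQ
  simp only [sqnorm_eq, rotMat, cross_apply, mulVec, dotProduct, Fin.sum_univ_three,
    Pi.sub_apply, cons_val', cons_val_zero, cons_val_one, head_cons, empty_val',
    cons_val_fin_one, head_fin_const, cons_val_two, tail_cons, of_apply]
  linear_combination (x 0 ^ 2 + x 1 ^ 2 + x 2 ^ 2) * (s ^ 2 + q 0 ^ 2 + q 1 ^ 2 + q 2 ^ 2 - 1) * hQ

lemma dotProduct_inertia_mulVec (N : ℕ) (w : Fin N → ℝ) (a : Fin N → Fin 3 → ℝ)
    (q : Fin 3 → ℝ) : q ⬝ᵥ (inertia N w a *ᵥ q) = ∑ i, w i * sqnorm (q ⨯₃ a i) := by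
  simp only [sqnorm_eq, inertia, cross_apply, mulVec, dotProduct, Fin.sum_univ_three,
    cons_val', cons_val_zero, cons_val_one, head_cons, empty_val', cons_val_fin_one,
    head_fin_const, cons_val_two, tail_cons, of_apply]
  simp only [Finset.mul_sum, Finset.sum_mul, neg_mul, ← Finset.sum_neg_distrib,
    ← Finset.sum_add_distrib]
  exact Finset.sum_congr rfl fun i _ => by ring

theorem rigid_rmsd_formula_com_general (N : ℕ)
    (a : Fin N → Fin 3 → ℝ) (w : Fin N → ℝ)
    (hW : 0 < ∑ i, w i)
    (hc : ∑ i, w i • a i = 0)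
    (s : ℝ) (q : Fin 3 → ℝ) (hQ : s ^ 2 + sqnorm q = 1) (t : Fin 3 → ℝ) :
    (1 / ∑ i, w i) * ∑ i, w i * sqnorm (a i - rotMat s q *ᵥ a i - t) =
      sqnorm t + (4 / ∑ i, w i) * (q ⬝ᵥ (inertia N w a *ᵥ q)) := by
  have hd : ∑ i, w i • (a i - rotMat s q *ᵥ a i) = 0 := by
    simp only [smul_sub, Finset.sum_sub_distrib, ← mulVec_smul, ← mulVec_sum, hc,
      mulVec_zero, sub_zero]
  rw [sum_mul_sqnorm_sub_of_sum_smul_eq_zero w _ hd, dotProduct_inertia_mulVec]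
  simp only [sqnorm_sub_rotMat_mulVec hQ, mul_left_comm _ (4 : ℝ), ← Finset.mul_sum]
  field_simp
  ring

/-- Rigid-body RMSD formula in the center-of-mass frame: if the weighted
centroid of the points vanishes, then for a unit quaternion `(s, q⃗)` with
rotation matrix `R` and a translation `t⃗`,
`(1/W)·Σ_i w i·‖a i − R·a i − t⃗‖² = ‖t⃗‖² + (4/W)·q⃗ᵀ·I·q⃗`. -/
theorem rigid_rmsd_formula_com (N : ℕ) (hN : 1 ≤ N)
    (a : Fin N → Fin 3 → ℝ) (w : Fin N → ℝ)
    (hw : ∀ i, 0 ≤ w i) (hW : 0 < ∑ i, w i)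
    (hc : ∑ i, w i • a i = 0)
    (s : ℝ) (q : Fin 3 → ℝ) (hQ : s ^ 2 + sqnorm q = 1) (t : Fin 3 → ℝ) :
    (1 / ∑ i, w i) * ∑ i, w i * sqnorm (a i - rotMat s q *ᵥ a i - t) =
      sqnorm t + (4 / ∑ i, w i) * (q ⬝ᵥ (inertia N w a *ᵥ q)) :=
  rigid_rmsd_formula_com_general N a w hW hc s q hQ t
end
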